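/- Let ρ = (p/2) Σ_{i,j=0}^{1} |ii⟩⟨jj| + ((1−p)/3) Σ_{k,l=2}^{4} |kk⟩⟨ll| on ℂ⁵⊗ℂ⁵, and δ = (1/2) Σ_{i=0}^{1} |ii⟩⟨ii|. Then ‖ρ − δ‖₁ = 2−2p if p < 1/2, and ‖ρ − δ‖₁ = 1 if p ≥ 1/2. -/

import Mathlib

open Matrix
open scoped ComplexOrder

/-- The positive semidefinite square root of a positive semidefinite matrix
(removed from Mathlib; restored with its old definition). -/
noncomputable def Matrix.PosSemidef.sqrt {n : Type*} {𝕜 : Type*} [Fintype n] [RCLike 𝕜]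
    [DecidableEq n] {A : Matrix n n 𝕜} (hA : A.PosSemidef) : Matrix n n 𝕜 :=
  hA.1.eigenvectorUnitary.1 * diagonal ((↑) ∘ (√·) ∘ hA.1.eigenvalues) *
  (star hA.1.eigenvectorUnitary : Matrix n n 𝕜)

/-- The trace norm ‖M‖₁ = Tr√(M†M). -/
noncomputable def traceNorm {n : Type*} [Fintype n] [DecidableEq n]
    (M : Matrix n n ℂ) : ℝ :=
  ((Matrix.posSemidef_conjTranspose_mul_self M).sqrt.trace).re

/-- The state ρ = (p/2) Σ_{i,j=0}^{1} |ii⟩⟨jj| + ((1−p)/3) Σ_{k,l=2}^{4} |kk⟩⟨ll|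
on ℂ⁵⊗ℂ⁵. -/
noncomputable def ρstate (p : ℝ) : Matrix (Fin 5 × Fin 5) (Fin 5 × Fin 5) ℂ :=
  Matrix.of fun a b =>
    if a.1 = a.2 ∧ b.1 = b.2 then
      (if a.1.val ≤ 1 ∧ b.1.val ≤ 1 then (p : ℂ) / 2
        else if 2 ≤ a.1.val ∧ 2 ≤ b.1.val then (1 - (p : ℂ)) / 3 else 0)
    else 0

/-- The separable state δ = (1/2) Σ_{i=0}^{1} |ii⟩⟨ii| on ℂ⁵⊗ℂ⁵. -/
noncomputable def δstate : Matrix (Fin 5 × Fin 5) (Fin 5 × Fin 5) ℂ :=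
  Matrix.of fun a b =>
    if a = b ∧ a.1 = a.2 ∧ a.1.val ≤ 1 then (1 / 2 : ℂ) else 0

/-
`ρ − δ` is a real combination of the rank-one projectors onto the mutually orthogonal vectors
`|00⟩ + |11⟩`, `|00⟩ − |11⟩` and `|22⟩ + |33⟩ + |44⟩`, with coefficients `(2p − 1)/4`, `−1/4`
and `(1 − p)/3`. For such a combination `M`, the matrix `S` with the coefficients replaced by
their absolute values is positive semidefinite with `S² = MᴴM`, so it is `√(MᴴM)` and
`‖M‖₁ = Tr S = 2|2p − 1|/4 + 2/4 + 3|1 − p|/3`.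
-/

open scoped MatrixOrder in
lemma Matrix.PosSemidef.eq_sqrt_of_sq_eq {n : Type*} [Fintype n] [DecidableEq n]
    {B : Matrix n n ℂ} (hB : B.PosSemidef) {A : Matrix n n ℂ} (hA : A.PosSemidef)
    (h : B ^ 2 = A) : B = hA.sqrt := by
  have hB_eq : B = CFC.sqrt A := by rw [← h, CFC.sqrt_sq B hB.nonneg]
  rw [hB_eq, CFC.sqrt_eq_cfc, cfc_nnreal_eq_real _ A hA.nonneg, hA.1.cfc_eq]
  simp [IsHermitian.cfc, Matrix.PosSemidef.sqrt, Function.comp_def, hA.eigenvalues_nonneg]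

lemma traceNorm_eq_re_trace_of_sq_eq {n : Type*} [Fintype n] [DecidableEq n]
    {M S : Matrix n n ℂ} (hS : S.PosSemidef) (h : S ^ 2 = Mᴴ * M) :
    traceNorm M = S.trace.re := by
  rw [traceNorm, ← hS.eq_sqrt_of_sq_eq _ h]

section OrthogonalFamily

variable {n ι : Type*} [Fintype n] [Fintype ι] {v : ι → n → ℂ}

lemma sum_smul_vecMulVec_mul_sum_smul_vecMulVec
    (hv : Pairwise fun i j => star (v i) ⬝ᵥ v j = 0) (a b : ι → ℂ) :
    (∑ i, a i • vecMulVec (v i) (star (v i))) * (∑ i, b i • vecMulVec (v i) (star (v i))) =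
      ∑ i, (a i * b i * (star (v i) ⬝ᵥ v i)) • vecMulVec (v i) (star (v i)) := by
  rw [Finset.sum_mul_sum]
  refine Finset.sum_congr rfl fun i _ => ?_
  rw [Finset.sum_eq_single i]
  · rw [smul_mul_smul_comm, vecMulVec_mul_vecMulVec]
    ext k l
    simp only [vecMulVec_apply, Pi.smul_apply, Matrix.smul_apply, smul_eq_mul]
    ring
  · intro j _ hji
    rw [smul_mul_smul_comm, vecMulVec_mul_vecMulVec, hv hji.symm, zero_smul]
    simp
  · simp

variable [DecidableEq n]

theorem traceNorm_sum_smul_vecMulVec (hv : Pairwise fun i j => star (v i) ⬝ᵥ v j = 0)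
    (c : ι → ℝ) :
    traceNorm (∑ i, (c i : ℂ) • vecMulVec (v i) (star (v i))) =
      ∑ i, |c i| * (star (v i) ⬝ᵥ v i).re := by
  set M := ∑ i, (c i : ℂ) • vecMulVec (v i) (star (v i))
  set S := ∑ i, ((|c i| : ℝ) : ℂ) • vecMulVec (v i) (star (v i))
  have hS : S.PosSemidef := posSemidef_sum _ fun i _ =>
    (posSemidef_vecMulVec_self_star (v i)).smul (by exact_mod_cast abs_nonneg (c i))
  have hM : Mᴴ = M := by simp [M, conjTranspose_sum, conjTranspose_smul]
  have hSM : S ^ 2 = Mᴴ * M := by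
    rw [hM, sq, sum_smul_vecMulVec_mul_sum_smul_vecMulVec hv,
      sum_smul_vecMulVec_mul_sum_smul_vecMulVec hv]
    refine Finset.sum_congr rfl fun i _ => ?_
    rw [← Complex.ofReal_mul, ← Complex.ofReal_mul, abs_mul_abs_self]
  rw [traceNorm_eq_re_trace_of_sq_eq hS hSM]
  simp [S, trace_sum, Complex.re_sum, dotProduct_comm]

end OrthogonalFamily

def ket00Plus11 : Fin 5 × Fin 5 → ℂ := fun a => if a = (0, 0) ∨ a = (1, 1) then 1 else 0

def ket00Minus11 : Fin 5 × Fin 5 → ℂ := fun a =>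
  if a = (0, 0) then 1 else if a = (1, 1) then -1 else 0

def ket22Plus33Plus44 : Fin 5 × Fin 5 → ℂ := fun a =>
  if a = (2, 2) ∨ a = (3, 3) ∨ a = (4, 4) then 1 else 0

def eigenbasis : Fin 3 → Fin 5 × Fin 5 → ℂ := ![ket00Plus11, ket00Minus11, ket22Plus33Plus44]

lemma star_eigenbasis (i : Fin 3) : star (eigenbasis i) = eigenbasis i := by
  funext a
  fin_cases i <;> simp [eigenbasis, ket00Plus11, ket00Minus11, ket22Plus33Plus44, apply_ite star]

lemma eigenbasis_dotProduct (i j : Fin 3) :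
    eigenbasis i ⬝ᵥ eigenbasis j = if i = j then ![2, 2, 3] i else 0 := by
  fin_cases i <;> fin_cases j <;>
    simp +decide [eigenbasis, ket00Plus11, ket00Minus11, ket22Plus33Plus44, dotProduct,
      Fintype.sum_prod_type, Fin.sum_univ_five, Prod.ext_iff] <;> norm_num

lemma pairwise_orthogonal_eigenbasis :
    Pairwise fun i j => star (eigenbasis i) ⬝ᵥ eigenbasis j = 0 := fun i j hij => by
  simp only [star_eigenbasis, eigenbasis_dotProduct, if_neg hij]

lemma eigenbasis_apply_of_ne (i : Fin 3) {a : Fin 5 × Fin 5} (ha : a.1 ≠ a.2) :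
    eigenbasis i a = 0 := by
  have ha' : ∀ k : Fin 5, a ≠ (k, k) := by rintro k rfl; exact ha rfl
  fin_cases i <;> simp [eigenbasis, ket00Plus11, ket00Minus11, ket22Plus33Plus44, ha']

lemma ρstate_sub_δstate (p : ℝ) :
    ρstate p - δstate = ∑ i, ((![(2 * p - 1) / 4, -1 / 4, (1 - p) / 3] i : ℝ) : ℂ) •
      vecMulVec (eigenbasis i) (star (eigenbasis i)) := by
  simp_rw [star_eigenbasis]
  ext a b
  simp only [Matrix.sub_apply, Matrix.sum_apply, Matrix.smul_apply, vecMulVec_apply,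
    smul_eq_mul]
  by_cases ha : a.1 = a.2
  · by_cases hb : b.1 = b.2
    · obtain ⟨a1, a2⟩ := a
      obtain ⟨b1, b2⟩ := b
      simp only at ha hb
      subst ha hb
      fin_cases a1 <;> fin_cases b1 <;>
        (simp +decide [ρstate, δstate, eigenbasis, ket00Plus11, ket00Minus11,
          ket22Plus33Plus44, Fin.sum_univ_three, Prod.ext_iff]; try ring)
    · have hab : a ≠ b := by rintro rfl; exact hb ha
      simp [ρstate, δstate, hab, hb, eigenbasis_apply_of_ne _ hb]
  · simp [ρstate, δstate, ha, eigenbasis_apply_of_ne _ ha]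

lemma traceNorm_ρstate_sub_δstate (p : ℝ) :
    traceNorm (ρstate p - δstate) = |2 * p - 1| / 2 + 1 / 2 + |1 - p| := by
  rw [ρstate_sub_δstate, traceNorm_sum_smul_vecMulVec pairwise_orthogonal_eigenbasis]
  simp [Fin.sum_univ_three, star_eigenbasis, eigenbasis_dotProduct, abs_div]
  ring

theorem stmt_9_general (p : ℝ) (hp1 : p ≤ 1) :
    (p < 1 / 2 → traceNorm (ρstate p - δstate) = 2 - 2 * p) ∧
    (1 / 2 ≤ p → traceNorm (ρstate p - δstate) = 1) := by
  rw [traceNorm_ρstate_sub_δstate, abs_of_nonneg (sub_nonneg.mpr hp1)]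
  constructor <;> intro hp
  · rw [abs_of_neg (by linarith)]; ring
  · rw [abs_of_nonneg (by linarith)]; ring

/-- ‖ρ − δ‖₁ equals 2−2p for p < 1/2 and equals 1 for p ≥ 1/2. -/
theorem stmt_9 (p : ℝ) (hp0 : 0 ≤ p) (hp1 : p ≤ 1) :
    (p < 1 / 2 → traceNorm (ρstate p - δstate) = 2 - 2 * p) ∧
    (1 / 2 ≤ p → traceNorm (ρstate p - δstate) = 1) :=
  stmt_9_general p hp1
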